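/- arXiv:2210.05497 — 2 statements merged into one kernel-verified Lean document; each statement's English description precedes it below -/
import Mathlib

section
/- Let X_1, …, X_k be i.i.d. standard normal random variables and set Z = Σ_{j=1}^k X_j². Then for any t > 0, P(Z − k ≥ 2√(k t) + 2t) ≤ exp(−t). -/
/-!
Chernoff's bound: for `0 ≤ l < 1/2` one has `𝔼 exp (l X²) = (1 - 2l)^(-1/2)` for a standard
normal `X`, so by independence `P(Z ≥ c) ≤ exp (-l c) (1 - 2l)^(-k/2)`. Take `l = √t / (√k + 2√t)`,
so that `1 - 2l = 1 / y` with `y = 1 + 2√(t/k)`. Then with `c = k + 2√(kt) + 2t` the exponent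
`-l c + (k/2) log y` equals `-t + (k/2) (log y - sinh (log y))`, and `x ≤ sinh x` for `x ≥ 0`.
-/

open MeasureTheory ProbabilityTheory Real
open scoped NNReal

-- For `1 ≤ 2 * l * v` both sides are junk `0`: the integral of a non-integrable function, and
-- `(√x)⁻¹` for `x ≤ 0`.
lemma mgf_sq_gaussianReal (v : ℝ≥0) (l : ℝ) :
    mgf (fun x ↦ x ^ 2) (gaussianReal 0 v) l = (√(1 - 2 * l * v))⁻¹ := by
  rcases eq_or_ne v 0 with rfl | hv
  · simp [gaussianReal_zero_var, mgf]
  have hpdf : ∀ x, gaussianPDFReal 0 v x • rexp (l * x ^ 2)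
      = (√(2 * π * v))⁻¹ * rexp (-((1 - 2 * l * v) / (2 * v)) * x ^ 2) := by
    intro x
    rw [gaussianPDFReal, smul_eq_mul, mul_assoc, ← Real.exp_add]
    congr 2
    field_simp
    ring
  rw [mgf, integral_gaussianReal_eq_integral_smul hv]
  simp_rw [hpdf]
  rw [integral_const_mul, integral_gaussian, ← Real.sqrt_inv, ← Real.sqrt_inv,
    ← Real.sqrt_mul (by positivity)]
  congr 1
  field_simp

lemma mgf_sq_of_map_eq_gaussianReal {Ω : Type*} {mΩ : MeasurableSpace Ω} {μ : Measure Ω}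
    {X : Ω → ℝ} {v : ℝ≥0} (hX : AEMeasurable X μ) (hdist : μ.map X = gaussianReal 0 v) (l : ℝ) :
    mgf (fun ω ↦ X ω ^ 2) μ l = (√(1 - 2 * l * v))⁻¹ := by
  rw [← mgf_sq_gaussianReal, ← hdist, mgf_map hX (by fun_prop)]
  rfl

namespace ProbabilityTheory

variable {ι Ω : Type*} [Fintype ι] {mΩ : MeasurableSpace Ω} {μ : Measure Ω} {X : ι → Ω → ℝ}
  {v : ℝ≥0}

lemma iIndepFun.mgf_sum_sq_of_gaussianReal (hindep : iIndepFun X μ)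
    (hmeas : ∀ j, Measurable (X j)) (hdist : ∀ j, μ.map (X j) = gaussianReal 0 v) (l : ℝ) :
    mgf (∑ j, fun ω ↦ X j ω ^ 2) μ l = (√(1 - 2 * l * v))⁻¹ ^ Fintype.card ι := by
  change mgf (∑ j, (fun x ↦ x ^ 2) ∘ X j) μ l = _
  rw [(hindep.comp (fun _ x ↦ x ^ 2) (fun _ ↦ by fun_prop)).mgf_sum (fun j ↦ by fun_prop)]
  simp [Function.comp_def, mgf_sq_of_map_eq_gaussianReal (hmeas _).aemeasurable (hdist _)]

lemma iIndepFun.measureReal_sum_sq_ge_le (hindep : iIndepFun X μ)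
    (hmeas : ∀ j, Measurable (X j)) (hdist : ∀ j, μ.map (X j) = gaussianReal 0 v)
    {l : ℝ} (hl₀ : 0 ≤ l) (hl : 2 * l * v < 1) (c : ℝ) :
    μ.real {ω | c ≤ ∑ j, X j ω ^ 2}
      ≤ rexp (-l * c) * (√(1 - 2 * l * v))⁻¹ ^ Fintype.card ι := by
  have := hindep.isProbabilityMeasure
  have hmgf := hindep.mgf_sum_sq_of_gaussianReal hmeas hdist l
  have hint : Integrable (fun ω ↦ rexp (l * (∑ j, fun ω ↦ X j ω ^ 2) ω)) μ :=
    mgf_pos_iff.1 (by rw [hmgf]; positivity)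
  simpa [hmgf] using measure_ge_le_exp_mul_mgf c hl₀ hint

end ProbabilityTheory

lemma Real.log_le_sub_inv_div_two {y : ℝ} (hy : 1 ≤ y) : log y ≤ (y - y⁻¹) / 2 := by
  rw [← sinh_log (by linarith)]
  exact self_le_sinh_iff.2 (log_nonneg hy)

lemma exp_neg_mul_mul_inv_sqrt_pow_le_exp_neg {k : ℕ} {t : ℝ} (hk : 0 < k) (ht : 0 < t) :
    let l := √t / (√k + 2 * √t)
    rexp (-l * (k + (2 * √(k * t) + 2 * t))) * (√(1 - 2 * l))⁻¹ ^ k ≤ rexp (-t) := by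
  intro l
  obtain ⟨a, ha, hak⟩ : ∃ a, 0 < a ∧ √(k : ℝ) = a := ⟨_, sqrt_pos.2 (by exact_mod_cast hk), rfl⟩
  obtain ⟨b, hb, hbt⟩ : ∃ b, 0 < b ∧ √t = b := ⟨_, sqrt_pos.2 ht, rfl⟩
  have hka : (k : ℝ) = a ^ 2 := by rw [← hak, sq_sqrt (Nat.cast_nonneg k)]
  have htb : t = b ^ 2 := by rw [← hbt, sq_sqrt ht.le]
  have hl : l = b / (a + 2 * b) := by rw [← hak, ← hbt]
  set y := (a + 2 * b) / a with hy_def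
  have hy : 1 ≤ y := by rw [le_div_iff₀ ha]; linarith
  have hsqrt : (√(1 - 2 * l))⁻¹ = rexp (log y / 2) := by
    have hly : 1 - 2 * l = y⁻¹ := by rw [hl, hy_def]; field_simp; ring
    rw [hly, sqrt_inv, inv_inv, sqrt_eq_rpow, rpow_def_of_pos (by linarith)]
    ring_nf
  have hexponent : -l * (k + (2 * √(k * t) + 2 * t)) + k * ((y - y⁻¹) / 4) = -t := by
    rw [sqrt_mul (Nat.cast_nonneg k), hak, hbt, hl, hy_def, hka, htb]
    field_simp
    ring
  have hlog : k * (log y / 2) ≤ k * ((y - y⁻¹) / 4) :=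
    mul_le_mul_of_nonneg_left (by linarith [log_le_sub_inv_div_two hy]) (Nat.cast_nonneg k)
  rw [hsqrt, ← exp_nat_mul, ← exp_add, exp_le_exp]
  linarith

theorem stmt_11 (k : ℕ) (Ω : Type*) [MeasurableSpace Ω] (μ : Measure Ω)
    [IsProbabilityMeasure μ] (X : Fin k → Ω → ℝ)
    (hmeas : ∀ j, Measurable (X j))
    (hindep : iIndepFun X μ)
    (hdist : ∀ j, μ.map (X j) = gaussianReal 0 1)
    (t : ℝ) (ht : 0 < t) :
    μ {ω | 2 * Real.sqrt (k * t) + 2 * t ≤ (∑ j, (X j ω) ^ 2) - k}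
      ≤ ENNReal.ofReal (Real.exp (-t)) := by
  rcases Nat.eq_zero_or_pos k with rfl | hk
  · simp [show ¬2 * t ≤ 0 by linarith]
  set l := √t / (√k + 2 * √t)
  have hl : 2 * l * (1 : ℝ≥0) < 1 := by
    have : 0 < √(k : ℝ) := sqrt_pos.2 (by exact_mod_cast hk)
    rw [NNReal.coe_one, mul_one, ← mul_div_assoc, div_lt_one (by positivity)]
    linarith
  simp_rw [le_sub_iff_add_le']
  rw [← ofReal_measureReal]
  refine ENNReal.ofReal_le_ofReal ?_
  calc _ ≤ rexp (-l * (k + (2 * √(k * t) + 2 * t))) * (√(1 - 2 * l * (1 : ℝ≥0)))⁻¹ ^ k := by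
        simpa using hindep.measureReal_sum_sq_ge_le hmeas hdist (by positivity) hl _
    _ ≤ rexp (-t) := by simpa using exp_neg_mul_mul_inv_sqrt_pow_le_exp_neg hk ht
end

section
/- Suppose f : ℝ^d → ℝ is differentiable with L-Lipschitz gradient, lower bounded by f*, and consider the deterministic masked-SAM update x_{t+1} = x_t − γ·∇f(x_t + ρ·(∇f(x_t) ⊙ m_t)/‖∇f(x_t)‖) with binary masks m_t ∈ {0,1}^d, step size 0 < γ ≤ 1/(2L), radius ρ > 0, and ∇f(x_t) ≠ 0 for all t. Then (1/T)·Σ_{t=0}^{T−1} ‖∇f(x_t)‖² ≤ C₁·(f(x_0) − f*)/(γT) + C₂·L²ρ² for some absolute constants C₁, C₂ > 0. -/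
/-- The Hadamard (componentwise) product of two vectors in Euclidean space. -/
def hadamard {d : ℕ} (a b : EuclideanSpace ℝ (Fin d)) : EuclideanSpace ℝ (Fin d) :=
  WithLp.toLp 2 (fun j => a j * b j)

/-! The masked perturbation has norm at most `ρ`, so by `L`-smoothness each step is a gradient step
along `h = ∇f(x_t) + e` with `‖e‖ ≤ Lρ`. The descent lemma together with `Lγ ≤ 1/2` gives
`f(x_{t+1}) ≤ f(x_t) - γ/2 ‖∇f(x_t)‖² + γ/2 ‖e‖²`; summing over `t < T` telescopes, and `f ≥ f*`
bounds the sum (constants `C₁ = 2`, `C₂ = 1`). -/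

open InnerProductSpace

section Smooth

variable {E : Type*} [NormedAddCommGroup E] [InnerProductSpace ℝ E] [CompleteSpace E]
  {f : E → ℝ} {L : ℝ}

/-- Mean value inequality for `z ↦ f z - ⟪∇f x, z⟫` on `[x, y]` (hence `L` rather than `L / 2`). -/
lemma le_add_inner_gradient_add_mul_norm_sub_sq (hf : Differentiable ℝ f) (hL : 0 ≤ L)
    (hLip : ∀ w v, ‖gradient f w - gradient f v‖ ≤ L * ‖w - v‖) (x y : E) :
    f y ≤ f x + ⟪gradient f x, y - x⟫_ℝ + L * ‖y - x‖ ^ 2 := by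
  set φ : E → ℝ := fun z => f z - ⟪gradient f x, z⟫_ℝ
  have hφ : ∀ z ∈ segment ℝ x y,
      HasFDerivWithinAt φ (toDual ℝ E (gradient f z - gradient f x)) (segment ℝ x y) z := by
    intro z _
    rw [map_sub]
    exact ((hf z).hasGradientAt.hasFDerivAt.sub
      (toDual ℝ E (gradient f x)).hasFDerivAt).hasFDerivWithinAt
  have hbound : ∀ z ∈ segment ℝ x y,
      ‖toDual ℝ E (gradient f z - gradient f x)‖ ≤ L * ‖y - x‖ := fun z hz => by
    rw [LinearIsometryEquiv.norm_map]
    exact (hLip z x).trans (by gcongr; exact norm_sub_le_of_mem_segment hz)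
  have hmvt := (convex_segment x y).norm_image_sub_le_of_norm_hasFDerivWithin_le
    hφ hbound (left_mem_segment ℝ x y) (right_mem_segment ℝ x y)
  have : φ y - φ x ≤ L * ‖y - x‖ * ‖y - x‖ := (le_abs_self _).trans hmvt
  simp only [φ, inner_sub_right] at this ⊢
  linarith

/-- `L γ ≤ 1/2` bounds the quadratic term by `γ/2 ‖h‖²`, and
`⟪∇f x, h⟫ - ‖h‖² / 2 = ‖∇f x‖² / 2 - ‖h - ∇f x‖² / 2`. -/
lemma half_mul_norm_gradient_sq_le_of_step (hf : Differentiable ℝ f) (hL : 0 ≤ L)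
    (hLip : ∀ w v, ‖gradient f w - gradient f v‖ ≤ L * ‖w - v‖) {γ : ℝ} (hγ : 0 ≤ γ)
    (hLγ : L * γ ≤ 1 / 2) (x h : E) :
    γ / 2 * ‖gradient f x‖ ^ 2 ≤ f x - f (x - γ • h) + γ / 2 * ‖h - gradient f x‖ ^ 2 := by
  have hdesc := le_add_inner_gradient_add_mul_norm_sub_sq hf hL hLip x (x - γ • h)
  rw [sub_sub_cancel_left, inner_neg_right, real_inner_smul_right, norm_neg, norm_smul,
    Real.norm_eq_abs, abs_of_nonneg hγ] at hdesc
  have hquad : L * (γ * ‖h‖) ^ 2 ≤ γ / 2 * ‖h‖ ^ 2 := by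
    have := mul_le_mul_of_nonneg_right hLγ (by positivity : 0 ≤ γ * ‖h‖ ^ 2)
    linarith
  rw [norm_sub_sq_real, real_inner_comm]
  nlinarith

end Smooth

lemma norm_div_norm_smul_le {E : Type*} [NormedAddCommGroup E] [NormedSpace ℝ E] {ρ : ℝ}
    (hρ : 0 ≤ ρ) {g v : E} (hv : ‖v‖ ≤ ‖g‖) : ‖(ρ / ‖g‖) • v‖ ≤ ρ := by
  rcases eq_or_ne g 0 with rfl | hg
  · simpa using hρ
  rw [norm_smul, Real.norm_of_nonneg (by positivity), div_mul_eq_mul_div,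
    div_le_iff₀ (norm_pos_iff.mpr hg)]
  gcongr

lemma norm_hadamard_le_left {d : ℕ} (a b : EuclideanSpace ℝ (Fin d))
    (hb : ∀ j, b j = 0 ∨ b j = 1) : ‖hadamard a b‖ ≤ ‖a‖ := by
  rw [EuclideanSpace.norm_eq, EuclideanSpace.norm_eq]
  gcongr with j
  rcases hb j with h | h <;> simp [hadamard, h]

lemma sum_range_le_of_le_sub_succ {u F : ℕ → ℝ} {e m : ℝ} (h : ∀ t, u t ≤ F t - F (t + 1) + e)
    (hm : ∀ t, m ≤ F t) (T : ℕ) : ∑ t ∈ Finset.range T, u t ≤ F 0 - m + T * e := by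
  calc ∑ t ∈ Finset.range T, u t ≤ ∑ t ∈ Finset.range T, (F t - F (t + 1) + e) :=
        Finset.sum_le_sum fun t _ => h t
    _ = F 0 - F T + T * e := by
      rw [Finset.sum_add_distrib, Finset.sum_range_sub' F, Finset.sum_const, Finset.card_range,
        nsmul_eq_mul]
    _ ≤ F 0 - m + T * e := by linarith [hm T]

theorem stmt_14 :
    ∃ C₁ > (0 : ℝ), ∃ C₂ > (0 : ℝ),
      ∀ (d : ℕ) (f : EuclideanSpace ℝ (Fin d) → ℝ) (L fstar γ ρ : ℝ)
        (x : ℕ → EuclideanSpace ℝ (Fin d)) (m : ℕ → EuclideanSpace ℝ (Fin d)),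
        Differentiable ℝ f →
        (0 < L) →
        (∀ w v, ‖gradient f w - gradient f v‖ ≤ L * ‖w - v‖) →
        (∀ w, fstar ≤ f w) →
        (∀ t j, m t j = 0 ∨ m t j = 1) →
        (0 < γ) → (γ ≤ 1 / (2 * L)) → (0 < ρ) →
        (∀ t, gradient f (x t) ≠ 0) →
        (∀ t, x (t + 1) = x t - γ •
          gradient f (x t + (ρ / ‖gradient f (x t)‖) • hadamard (gradient f (x t)) (m t))) →
        ∀ T : ℕ, 0 < T →
          (1 / (T : ℝ)) * ∑ t ∈ Finset.range T, ‖gradient f (x t)‖ ^ 2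
            ≤ C₁ * (f (x 0) - fstar) / (γ * T) + C₂ * L ^ 2 * ρ ^ 2 := by
  refine ⟨2, two_pos, 1, one_pos, ?_⟩
  intro d f L fstar γ ρ x m hf hL hLip hlow hm hγ hγL hρ _ hupd T hT
  have hLγ : L * γ ≤ 1 / 2 := by
    rw [le_div_iff₀ (by positivity)] at hγL
    linarith
  have hstep : ∀ t, γ / 2 * ‖gradient f (x t)‖ ^ 2
      ≤ f (x t) - f (x (t + 1)) + γ / 2 * (L * ρ) ^ 2 := fun t => by
    refine (hupd t ▸ half_mul_norm_gradient_sq_le_of_step hf hL.le hLip hγ.le hLγ _ _).trans ?_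
    gcongr
    refine (hLip _ _).trans ?_
    rw [add_sub_cancel_left]
    exact mul_le_mul_of_nonneg_left
      (norm_div_norm_smul_le hρ.le (norm_hadamard_le_left _ _ (hm t))) hL.le
  have hsum := sum_range_le_of_le_sub_succ hstep (fun t => hlow (x t)) T
  rw [← Finset.mul_sum] at hsum
  have hT0 : (0 : ℝ) < T := by exact_mod_cast hT
  rw [one_div_mul_eq_div, div_le_iff₀ hT0]
  calc ∑ t ∈ Finset.range T, ‖gradient f (x t)‖ ^ 2
      ≤ 2 / γ * (f (x 0) - fstar) + T * (L * ρ) ^ 2 := by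
        rw [div_mul_eq_mul_div, ← sub_le_iff_le_add, le_div_iff₀ hγ]
        linarith
    _ = (2 * (f (x 0) - fstar) / (γ * T) + 1 * L ^ 2 * ρ ^ 2) * T := by
        field_simp
end
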